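/- Fix a positive integer N and define G(q) = (μ(q)/φ(q)²) · Σ_{a : 0 < a < q, gcd(a, q) = 1} e^{2πi·a·N/q}. Then the series Σ_{q=1}^∞ G(q) converges absolutely, the infinite product ∏_{p prime} (1 + G(p)) converges, and Σ_{q=1}^∞ G(q) = ∏_{p prime} (1 + G(p)). -/

import Mathlib

/-!
The terms `G(q)` are the values of the multiplicative arithmetic function
`q ↦ μ(q) c_q(N) / φ(q)²`: splitting the coprimality condition with Möbius and summing the
geometric progressions over the divisors of `q` gives the Ramanujan sum
`c_q(N) = ∑_{d ∣ q} μ(d) · (q/d) · [q/d ∣ N]`. Hence `|G(q)| ≤ σ(N)/φ(q)²`, and since `G` is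
supported on squarefree `q`, where `p³ ≤ (p - 1)⁵` for odd `p` gives `q^{6/5} ≤ 4 φ(q)²`, the
series converges absolutely. The Euler product of a multiplicative function supported on
squarefree numbers has local factors `1 + G(p)`.
-/

open Finset ArithmeticFunction

/-- `G N q = (μ(q)/φ(q)²) · Σ_{0 < a < q, gcd(a,q)=1} e^{2πi·a·N/q}`, with `G N 1 = 1`. -/
noncomputable def goldbachG (N q : ℕ) : ℂ :=
  if q = 1 then 1
  else ((ArithmeticFunction.moebius q : ℤ) : ℂ) / ((Nat.totient q : ℂ)) ^ 2 *
    ∑ a ∈ (Finset.Ioo 0 q).filter (fun a => Nat.gcd a q = 1),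
      Complex.exp ((2 * Real.pi * a * N / q : ℝ) * Complex.I)

open scoped ArithmeticFunction.Moebius

theorem Finset.sum_range_filter_dvd {M : Type*} [AddCommMonoid M] {d q : ℕ} (hdq : d ∣ q)
    (f : ℕ → M) : ∑ a ∈ (range q).filter (d ∣ ·), f a = ∑ b ∈ range (q / d), f (d * b) := by
  obtain ⟨k, rfl⟩ := hdq
  rcases d.eq_zero_or_pos with rfl | hd
  · simp
  rw [Nat.mul_div_cancel_left k hd]
  symm
  refine sum_nbij (d * ·) (fun b hb => ?_) (fun b _ c _ h => Nat.eq_of_mul_eq_mul_left hd h)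
    (fun a ha => ?_) (fun _ _ => rfl)
  · simpa [hd] using hb
  · obtain ⟨ha, b, rfl⟩ := mem_filter.1 ha
    exact ⟨b, by simpa [hd] using ha, rfl⟩

namespace ArithmeticFunction

theorem sum_divisors_moebius {R : Type*} [Ring R] (n : ℕ) :
    ∑ d ∈ n.divisors, (μ : ArithmeticFunction R) d = if n = 1 then 1 else 0 := by
  rw [← coe_mul_zeta_apply, coe_moebius_mul_coe_zeta, one_apply]

def idOnDivisors (N : ℕ) : ArithmeticFunction ℕ :=
  ⟨fun d => if d ∣ N then d else 0, by simp⟩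

theorem idOnDivisors_apply (N d : ℕ) : idOnDivisors N d = if d ∣ N then d else 0 := rfl

theorem isMultiplicative_idOnDivisors (N : ℕ) : (idOnDivisors N).IsMultiplicative := by
  refine ⟨by simp [idOnDivisors_apply], fun {m n} hmn => ?_⟩
  simp only [idOnDivisors_apply]
  have hdvd : m * n ∣ N ↔ m ∣ N ∧ n ∣ N :=
    ⟨fun h => ⟨(dvd_mul_right m n).trans h, (dvd_mul_left n m).trans h⟩,
      fun h => hmn.mul_dvd_of_dvd_of_dvd h.1 h.2⟩
  by_cases hm : m ∣ N <;> by_cases hn : n ∣ N <;> simp [hdvd, hm, hn]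

theorem sum_divisors_idOnDivisors_le {N : ℕ} (hN : N ≠ 0) (q : ℕ) :
    ∑ d ∈ q.divisors, idOnDivisors N d ≤ sigma 1 N := by
  simp_rw [idOnDivisors_apply, ← sum_filter, sigma_one_apply]
  exact sum_le_sum_of_subset fun d hd => Nat.mem_divisors.2 ⟨(mem_filter.1 hd).2, hN⟩

def totient : ArithmeticFunction ℕ := ⟨Nat.totient, Nat.totient_zero⟩

theorem totient_apply (n : ℕ) : totient n = n.totient := rfl

theorem isMultiplicative_totient : totient.IsMultiplicative :=
  ⟨Nat.totient_one, fun h => Nat.totient_mul h⟩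

end ArithmeticFunction

namespace IsPrimitiveRoot

variable {R : Type*} [CommRing R] [IsDomain R] {ζ : R} {m : ℕ}

theorem sum_range_pow_mul (hζ : IsPrimitiveRoot ζ m) (N : ℕ) :
    ∑ b ∈ range m, ζ ^ (b * N) = if m ∣ N then (m : R) else 0 := by
  simp_rw [mul_comm _ N, pow_mul]
  split_ifs with h
  · simp [(hζ.pow_eq_one_iff_dvd N).2 h]
  · have hne : ζ ^ N - 1 ≠ 0 := sub_ne_zero.2 (mt (hζ.pow_eq_one_iff_dvd N).1 h)
    have hgeom := geom_sum_mul (ζ ^ N) m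
    rw [← pow_mul, mul_comm N m, pow_mul, hζ.pow_eq_one, one_pow, sub_self] at hgeom
    exact (mul_eq_zero.1 hgeom).resolve_right hne

theorem sum_coprime_pow_mul (hζ : IsPrimitiveRoot ζ m) (N : ℕ) :
    ∑ a ∈ (range m).filter (Nat.Coprime · m), ζ ^ (a * N) =
      ((μ : ArithmeticFunction R) * idOnDivisors N) m := by
  rcases m.eq_zero_or_pos with rfl | hm
  · simp
  calc ∑ a ∈ (range m).filter (Nat.Coprime · m), ζ ^ (a * N)
      = ∑ a ∈ range m, ∑ d ∈ (a.gcd m).divisors, (μ : ArithmeticFunction R) d * ζ ^ (a * N) := by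
        simp_rw [sum_filter, ← sum_mul, sum_divisors_moebius, ite_mul, one_mul, zero_mul]
    _ = ∑ d ∈ m.divisors, ∑ a ∈ (range m).filter (d ∣ ·),
          (μ : ArithmeticFunction R) d * ζ ^ (a * N) := by
        refine sum_comm' fun a d => ?_
        simp only [mem_range, Nat.mem_divisors, mem_filter, Nat.dvd_gcd_iff]
        have := (Nat.gcd_pos_of_pos_right a hm).ne'
        have := hm.ne'
        tauto
    _ = ∑ d ∈ m.divisors, (μ : ArithmeticFunction R) d * idOnDivisors N (m / d) := by
        refine sum_congr rfl fun d hd => ?_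
        have hdm := Nat.dvd_of_mem_divisors hd
        rw [← mul_sum, sum_range_filter_dvd hdm]
        simp_rw [mul_assoc, pow_mul ζ d]
        rw [(hζ.pow_of_dvd (Nat.pos_of_mem_divisors hd).ne' hdm).sum_range_pow_mul,
          idOnDivisors_apply, Nat.cast_ite, Nat.cast_zero]
    _ = ((μ : ArithmeticFunction R) * idOnDivisors N) m := by
        rw [mul_apply, Nat.sum_divisorsAntidiagonal
          (fun d e => (μ : ArithmeticFunction R) d * (idOnDivisors N : ArithmeticFunction R) e)]
        simp [natCoe_apply]

end IsPrimitiveRoot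

theorem Nat.Prime.pow_three_le_pred_pow_five {p : ℕ} (hp : p.Prime) (hp2 : p ≠ 2) :
    p ^ 3 ≤ (p - 1) ^ 5 := by
  obtain ⟨x, rfl⟩ : ∃ x, p = x + 1 := ⟨p - 1, by have := hp.two_le; omega⟩
  have hx : 2 ≤ x := by have := hp.two_le; omega
  rw [Nat.add_sub_cancel]
  nlinarith [pow_le_pow_left₀ (Nat.zero_le _) hx 3, Nat.mul_le_mul hx hx]

theorem Nat.pow_three_le_eight_mul_totient_pow_five_of_squarefree {q : ℕ} (hq : Squarefree q) :
    q ^ 3 ≤ 8 * q.totient ^ 5 := by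
  have hprod := Nat.prod_primeFactors_of_squarefree hq
  have htot : q.totient = ∏ p ∈ q.primeFactors, (p - 1) := by
    have := Nat.totient_mul_prod_primeFactors q
    rw [hprod, mul_comm q] at this
    exact Nat.eq_of_mul_eq_mul_right (Nat.pos_of_ne_zero hq.ne_zero) this
  rw [htot, ← prod_pow]
  conv_lhs => rw [← hprod, ← prod_pow]
  calc ∏ p ∈ q.primeFactors, p ^ 3
      ≤ ∏ p ∈ q.primeFactors, (if p = 2 then 8 else 1) * (p - 1) ^ 5 := by
        refine prod_le_prod' fun p hp => ?_
        split_ifs with h2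
        · subst h2; norm_num
        · simpa using (Nat.prime_of_mem_primeFactors hp).pow_three_le_pred_pow_five h2
    _ = (if 2 ∈ q.primeFactors then 8 else 1) * ∏ p ∈ q.primeFactors, (p - 1) ^ 5 := by
        rw [prod_mul_distrib, prod_ite_eq']
    _ ≤ 8 * ∏ p ∈ q.primeFactors, (p - 1) ^ 5 := by
        gcongr
        split_ifs <;> norm_num

theorem Nat.rpow_six_fifths_le_four_mul_totient_sq_of_squarefree {q : ℕ} (hq : Squarefree q) :
    (q : ℝ) ^ (6 / 5 : ℝ) ≤ 4 * (q.totient : ℝ) ^ 2 := by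
  refine le_of_pow_le_pow_left₀ (n := 5) (by norm_num) (by positivity) ?_
  calc ((q : ℝ) ^ (6 / 5 : ℝ)) ^ 5 = ((q : ℝ) ^ 3) ^ 2 := by
        rw [← Real.rpow_natCast, ← Real.rpow_mul (Nat.cast_nonneg q), ← pow_mul]
        norm_num
    _ ≤ (8 * (q.totient : ℝ) ^ 5) ^ 2 := by
        gcongr
        exact_mod_cast Nat.pow_three_le_eight_mul_totient_pow_five_of_squarefree hq
    _ ≤ (4 * (q.totient : ℝ) ^ 2) ^ 5 := by
        ring_nf
        gcongr
        norm_num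

namespace ArithmeticFunction

theorem IsMultiplicative.tsum_apply_prime_pow_eq_one_add {R : Type*} [Semiring R]
    [TopologicalSpace R] {f : ArithmeticFunction R} (hf : f.IsMultiplicative)
    (hsq : ∀ n, ¬Squarefree n → f n = 0) {p : ℕ} (hp : p.Prime) :
    ∑' e, f (p ^ e) = 1 + f p := by
  have hvanish : ∀ e ∉ ({0, 1} : Finset ℕ), f (p ^ e) = 0 := fun e he => by
    simp only [mem_insert, mem_singleton, not_or] at he
    exact hsq _ fun h => he.2 ((Nat.squarefree_pow_iff hp.ne_one he.1).1 h).2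
  rw [tsum_eq_sum hvanish, sum_pair zero_ne_one, pow_zero, pow_one, hf.map_one]

/-- `μ * idOnDivisors N` is the Ramanujan sum `q ↦ c_q(N)`, see
`IsPrimitiveRoot.sum_coprime_pow_mul`. -/
noncomputable def goldbachTerm (N : ℕ) : ArithmeticFunction ℂ :=
  ((μ : ArithmeticFunction ℂ).pmul ((μ : ArithmeticFunction ℂ) * idOnDivisors N)).pdiv
    ((totient : ArithmeticFunction ℂ).ppow 2)

theorem goldbachTerm_apply (N q : ℕ) :
    goldbachTerm N q =
      μ q * ((μ : ArithmeticFunction ℂ) * idOnDivisors N) q / (q.totient : ℂ) ^ 2 := by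
  simp [goldbachTerm, pdiv_apply, pmul_apply, ppow_apply, totient_apply]

theorem isMultiplicative_goldbachTerm (N : ℕ) : (goldbachTerm N).IsMultiplicative :=
  (isMultiplicative_moebius.intCast.pmul
    (isMultiplicative_moebius.intCast.mul (isMultiplicative_idOnDivisors N).natCast)).pdiv
    isMultiplicative_totient.natCast.ppow

theorem goldbachTerm_eq_zero_of_not_squarefree (N : ℕ) {q : ℕ} (hq : ¬Squarefree q) :
    goldbachTerm N q = 0 := by
  simp [goldbachTerm_apply, moebius_eq_zero_of_not_squarefree hq]

theorem norm_moebius_mul_idOnDivisors_le {N : ℕ} (hN : N ≠ 0) (q : ℕ) :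
    ‖((μ : ArithmeticFunction ℂ) * idOnDivisors N) q‖ ≤ sigma 1 N := by
  rw [mul_apply, Nat.sum_divisorsAntidiagonal
    (fun d e => (μ : ArithmeticFunction ℂ) d * (idOnDivisors N : ArithmeticFunction ℂ) e)]
  calc _ ≤ ∑ d ∈ q.divisors,
        ‖(μ : ArithmeticFunction ℂ) d * (idOnDivisors N : ArithmeticFunction ℂ) (q / d)‖ :=
        norm_sum_le _ _
    _ ≤ ∑ d ∈ q.divisors, (idOnDivisors N (q / d) : ℝ) := by
        refine sum_le_sum fun d _ => ?_
        rw [norm_mul, intCoe_apply, natCoe_apply, Complex.norm_intCast, Complex.norm_natCast]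
        exact mul_le_of_le_one_left (Nat.cast_nonneg _) (mod_cast abs_moebius_le_one)
    _ ≤ sigma 1 N := by
        rw [Nat.sum_div_divisors q (fun d => (idOnDivisors N d : ℝ))]
        exact_mod_cast sum_divisors_idOnDivisors_le hN q

theorem norm_goldbachTerm_le {N : ℕ} (hN : N ≠ 0) (q : ℕ) :
    ‖goldbachTerm N q‖ ≤ 4 * sigma 1 N * ((q : ℝ) ^ (6 / 5 : ℝ))⁻¹ := by
  by_cases hq : Squarefree q
  swap
  · rw [goldbachTerm_eq_zero_of_not_squarefree N hq, norm_zero]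
    positivity
  have hqpos : (0 : ℝ) < q := mod_cast Nat.pos_of_ne_zero hq.ne_zero
  calc ‖goldbachTerm N q‖
      = ‖(μ q : ℂ)‖ * ‖((μ : ArithmeticFunction ℂ) * idOnDivisors N) q‖ / (q.totient : ℝ) ^ 2 := by
        rw [goldbachTerm_apply, norm_div, norm_mul, norm_pow, Complex.norm_natCast]
    _ ≤ 1 * sigma 1 N / ((q : ℝ) ^ (6 / 5 : ℝ) / 4) := by
        gcongr
        · rw [Complex.norm_intCast]; exact_mod_cast abs_moebius_le_one
        · exact norm_moebius_mul_idOnDivisors_le hN q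
        · linarith [Nat.rpow_six_fifths_le_four_mul_totient_sq_of_squarefree hq]
    _ = 4 * sigma 1 N * ((q : ℝ) ^ (6 / 5 : ℝ))⁻¹ := by ring

theorem summable_norm_goldbachTerm {N : ℕ} (hN : N ≠ 0) : Summable (‖goldbachTerm N ·‖) :=
  .of_nonneg_of_le (fun _ => norm_nonneg _) (norm_goldbachTerm_le hN)
    ((Real.summable_nat_rpow_inv.2 (by norm_num)).mul_left _)

end ArithmeticFunction

theorem goldbachG_eq_goldbachTerm (N : ℕ) {q : ℕ} (hq : q ≠ 0) :
    goldbachG N q = goldbachTerm N q := by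
  rcases eq_or_ne q 1 with rfl | hq1
  · rw [goldbachG, if_pos rfl, (isMultiplicative_goldbachTerm N).map_one]
  have hfilter : (Ioo 0 q).filter (fun a => a.gcd q = 1) = (range q).filter (Nat.Coprime · q) := by
    ext a
    -- `a = 0` is coprime to `q` only when `q = 1`
    rcases eq_or_ne a 0 with rfl | ha
    · simp [hq1]
    · simp [Nat.pos_of_ne_zero ha, Nat.Coprime]
  have hexp : ∀ a : ℕ, Complex.exp ((2 * Real.pi * a * N / q : ℝ) * Complex.I) =
      Complex.exp (2 * Real.pi * Complex.I / q) ^ (a * N) := fun a => by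
    rw [← Complex.exp_nat_mul]
    push_cast
    ring_nf
  rw [goldbachG, if_neg hq1, hfilter, sum_congr rfl fun a _ => hexp a,
    (Complex.isPrimitiveRoot_exp q hq).sum_coprime_pow_mul, goldbachTerm_apply]
  ring

/-- The series `Σ_{q=1}^∞ G(q)` converges absolutely, the product
`∏_{p prime} (1 + G(p))` converges, and the two are equal. -/
theorem goldbachG_sum_eq_euler_product (N : ℕ) (hN : 0 < N) :
    Summable (fun q : ℕ => ‖goldbachG N (q + 1)‖) ∧
    Multipliable (fun p : Nat.Primes => 1 + goldbachG N p) ∧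
    (∑' q : ℕ, goldbachG N (q + 1)) = ∏' p : Nat.Primes, (1 + goldbachG N p) := by
  have hG (q : ℕ) : goldbachG N (q + 1) = goldbachTerm N (q + 1) :=
    goldbachG_eq_goldbachTerm N q.succ_ne_zero
  have hsum := summable_norm_goldbachTerm hN.ne'
  have hprod := (isMultiplicative_goldbachTerm N).eulerProduct_hasProd hsum
  have hlocal (p : Nat.Primes) : ∑' e, goldbachTerm N (p ^ e) = 1 + goldbachG N p := by
    rw [(isMultiplicative_goldbachTerm N).tsum_apply_prime_pow_eq_one_add
      (fun _ => goldbachTerm_eq_zero_of_not_squarefree N) p.prop,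
      goldbachG_eq_goldbachTerm N p.prop.ne_zero]
  simp only [hlocal] at hprod
  refine ⟨?_, hprod.multipliable, ?_⟩
  · simpa only [hG] using (summable_nat_add_iff 1).2 hsum
  · rw [hprod.tprod_eq, hsum.of_norm.tsum_eq_zero_add, ArithmeticFunction.map_zero, zero_add]
    simp only [hG]
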